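/- arXiv:0809.0424 — 2 statements merged into one kernel-verified Lean document; each statement's English description precedes it below -/
import Mathlib

section
/- There exist complex (signed) Borel measures μ and ν on ℝ and a Borel function f : ℝ → ℂ such that f is integrable with respect to the convolution μ*ν, but the function (x,y) ↦ f(x+y) is not integrable with respect to the total variation |μ×ν| of the product measure. (Hence the converse of the change-of-variables implication fails for nonpositive measures.) -/
open MeasureTheory

noncomputable section
namespace Paper

variable {α : Type*} [MeasurableSpace α]

def posRe (c : ComplexMeasure α) : Measure α := (ComplexMeasure.re c).toJordanDecomposition.posPart
def negRe (c : ComplexMeasure α) : Measure α := (ComplexMeasure.re c).toJordanDecomposition.negPart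
def posIm (c : ComplexMeasure α) : Measure α := (ComplexMeasure.im c).toJordanDecomposition.posPart
def negIm (c : ComplexMeasure α) : Measure α := (ComplexMeasure.im c).toJordanDecomposition.negPart

/-- Integrability with respect to a complex measure: integrability with respect to
each of the four positive parts, equivalently w.r.t. their sum. -/
def cvar (c : ComplexMeasure α) : Measure α := posRe c + negRe c + posIm c + negIm c

def CIntegrable (f : α → ℂ) (c : ComplexMeasure α) : Prop := Integrable f (cvar c)

/-- The integral with respect to a complex measure. -/
def cintegral (f : α → ℂ) (c : ComplexMeasure α) : ℂ :=
  ((∫ x, f x ∂(posRe c)) - (∫ x, f x ∂(negRe c))) +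
    Complex.I * ((∫ x, f x ∂(posIm c)) - (∫ x, f x ∂(negIm c)))

/-- The product of two signed measures, via Jordan decompositions. -/
def sprod {β : Type*} [MeasurableSpace β] (s : SignedMeasure α) (t : SignedMeasure β) :
    SignedMeasure (α × β) :=
  ((s.toJordanDecomposition.posPart.prod t.toJordanDecomposition.posPart).toSignedMeasure +
    (s.toJordanDecomposition.negPart.prod t.toJordanDecomposition.negPart).toSignedMeasure) -
  ((s.toJordanDecomposition.posPart.prod t.toJordanDecomposition.negPart).toSignedMeasure +
    (s.toJordanDecomposition.negPart.prod t.toJordanDecomposition.posPart).toSignedMeasure)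

/-- The product of two complex measures. -/
def cprod {β : Type*} [MeasurableSpace β] (μ : ComplexMeasure α) (ν : ComplexMeasure β) :
    ComplexMeasure (α × β) :=
  SignedMeasure.toComplexMeasure
    (sprod (ComplexMeasure.re μ) (ComplexMeasure.re ν) -
      sprod (ComplexMeasure.im μ) (ComplexMeasure.im ν))
    (sprod (ComplexMeasure.re μ) (ComplexMeasure.im ν) +
      sprod (ComplexMeasure.im μ) (ComplexMeasure.re ν))

/-- The convolution of two complex Borel measures on ℝ: the pushforward of the
product measure under addition. -/
def conv (μ ν : ComplexMeasure ℝ) : ComplexMeasure ℝ :=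
  (cprod μ ν).map (fun p : ℝ × ℝ => p.1 + p.2)

/-- The (genuine) total variation measure of a complex measure. -/
def tvar (c : ComplexMeasure α) : Measure α :=
  (cvar c).withDensity (fun x => ENNReal.ofReal ‖ComplexMeasure.rnDeriv c (cvar c) x‖)

/-! Take `μ = δ₀ + δ₁` and `ν = λ - τλ`, where `λ` is Lebesgue measure on `(0,1)` and `τλ` its
translate to `(-1,0)`. The two copies of `λ` cancel in the convolution: `μ * ν` is the
translate of `λ` to `(1,2)` minus its translate to `(-1,0)`, so `f = 1/x` on `(0,1)` (and `0`
elsewhere) is `μ * ν`-almost everywhere zero. They do not cancel in the product: since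
`μ × τλ` does not charge `{0} × (0,1)`, `|μ × ν|` dominates `δ₀ × λ`, against which
`f (x + y) = 1/y` is not integrable. -/

instance (c : ComplexMeasure α) : IsFiniteMeasure (cvar c) := by
  unfold cvar posRe negRe posIm negIm; infer_instance

lemma toJordanDecomposition_parts_apply_eq_zero {s : SignedMeasure α} {S : Set α}
    (hS : MeasurableSet S) (h : ∀ T ⊆ S, MeasurableSet T → s T = 0) :
    s.toJordanDecomposition.posPart S = 0 ∧ s.toJordanDecomposition.negPart S = 0 := by
  obtain ⟨i, hi, hpos, hneg, hposPart, hnegPart⟩ := s.toJordanDecomposition_spec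
  rw [hposPart, hnegPart, SignedMeasure.toMeasureOfZeroLE_apply _ hpos hi hS,
    SignedMeasure.toMeasureOfLEZero_apply _ hneg hi.compl hS]
  simp [h _ Set.inter_subset_right (hi.inter hS),
    h _ Set.inter_subset_right (hi.compl.inter hS)]

lemma re_absolutelyContinuous_cvar (c : ComplexMeasure α) :
    ComplexMeasure.re c ≪ᵥ (cvar c).toENNRealVectorMeasure := by
  refine VectorMeasure.AbsolutelyContinuous.mk fun E hE hcE => ?_
  rw [Measure.toENNRealVectorMeasure_apply_measurable hE] at hcE
  obtain ⟨⟨⟨hposE, hnegE⟩, -⟩, -⟩ := by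
    simpa only [cvar, Measure.add_apply, add_eq_zero] using hcE
  rw [← (ComplexMeasure.re c).toSignedMeasure_toJordanDecomposition,
    JordanDecomposition.toSignedMeasure, Measure.toSignedMeasure_sub_apply hE,
    measureReal_def, measureReal_def,
    show (ComplexMeasure.re c).toJordanDecomposition.posPart E = 0 from hposE,
    show (ComplexMeasure.re c).toJordanDecomposition.negPart E = 0 from hnegE]
  simp

lemma ofReal_re_apply_le_tvar (c : ComplexMeasure α) {E : Set α} (hE : MeasurableSet E) :
    ENNReal.ofReal (ComplexMeasure.re c E) ≤ tvar c E := by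
  set g := (ComplexMeasure.re c).rnDeriv (cvar c)
  have hg : Integrable g (cvar c) := SignedMeasure.integrable_rnDeriv _ _
  have hcE : ComplexMeasure.re c E = ∫ x in E, g x ∂cvar c := by
    conv_lhs => rw [← SignedMeasure.withDensityᵥ_rnDeriv_eq _ _ (re_absolutelyContinuous_cvar c)]
    exact withDensityᵥ_apply hg hE
  calc ENNReal.ofReal (ComplexMeasure.re c E)
      ≤ ENNReal.ofReal (∫ x in E, ‖g x‖ ∂cvar c) := by
        rw [hcE]
        exact ENNReal.ofReal_le_ofReal (le_trans (le_abs_self _) (abs_integral_le_integral_abs))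
    _ = ∫⁻ x in E, ENNReal.ofReal ‖g x‖ ∂cvar c :=
        ofReal_integral_eq_lintegral_ofReal hg.norm.restrict (.of_forall fun _ => norm_nonneg _)
    _ ≤ ∫⁻ x in E, ENNReal.ofReal ‖ComplexMeasure.rnDeriv c (cvar c) x‖ ∂cvar c :=
        lintegral_mono fun x =>
          ENNReal.ofReal_le_ofReal (Complex.abs_re_le_norm (ComplexMeasure.rnDeriv c (cvar c) x))
    _ = tvar c E := by rw [tvar, withDensity_apply _ hE]

lemma map_toComplexMeasure {β : Type*} [MeasurableSpace β] (s t : SignedMeasure α) {g : α → β}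
    (hg : Measurable g) :
    (s.toComplexMeasure t).map g = SignedMeasure.toComplexMeasure (s.map g) (t.map g) := by
  ext E hE
  simp [VectorMeasure.map_apply _ hg hE, SignedMeasure.toComplexMeasure_apply]

lemma toSignedMeasure_map {β : Type*} [MeasurableSpace β] (m : Measure α) [IsFiniteMeasure m]
    {g : α → β} (hg : Measurable g) : (m.map g).toSignedMeasure = m.toSignedMeasure.map g := by
  ext E hE
  rw [VectorMeasure.map_apply _ hg hE, Measure.toSignedMeasure_apply_measurable hE,
    Measure.toSignedMeasure_apply_measurable (hg hE), map_measureReal_apply hg hE]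

lemma sprod_zero_left {β : Type*} [MeasurableSpace β] (t : SignedMeasure β) :
    sprod (0 : SignedMeasure α) t = 0 := by
  simp [sprod, SignedMeasure.toJordanDecomposition_zero]

lemma sprod_zero_right {β : Type*} [MeasurableSpace β] (s : SignedMeasure α) :
    sprod s (0 : SignedMeasure β) = 0 := by
  simp [sprod, SignedMeasure.toJordanDecomposition_zero]

lemma cprod_toComplexMeasure_zero {β : Type*} [MeasurableSpace β] (s : SignedMeasure α)
    (t : SignedMeasure β) : cprod (s.toComplexMeasure 0) (t.toComplexMeasure 0) =
      (sprod s t).toComplexMeasure 0 := by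
  rw [cprod, SignedMeasure.re_toComplexMeasure, SignedMeasure.im_toComplexMeasure,
    SignedMeasure.re_toComplexMeasure, SignedMeasure.im_toComplexMeasure, sprod_zero_left,
    sprod_zero_right, sprod_zero_left, sub_zero, add_zero]

lemma sprod_toSignedMeasure {β : Type*} [MeasurableSpace β] (j : JordanDecomposition α)
    (k : JordanDecomposition β) : sprod j.toSignedMeasure k.toSignedMeasure =
      (j.posPart.prod k.posPart + j.negPart.prod k.negPart).toSignedMeasure -
        (j.posPart.prod k.negPart + j.negPart.prod k.posPart).toSignedMeasure := by
  simp only [sprod, JordanDecomposition.toJordanDecomposition_toSignedMeasure,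
    Measure.toSignedMeasure_add]

lemma cvar_toComplexMeasure_sub_apply_eq_zero {P N : Measure α} [IsFiniteMeasure P]
    [IsFiniteMeasure N] {S : Set α} (hS : MeasurableSet S)
    (hPN : ∀ T ⊆ S, MeasurableSet T → P T = N T) :
    cvar ((P.toSignedMeasure - N.toSignedMeasure).toComplexMeasure 0) S = 0 := by
  obtain ⟨hpos, hneg⟩ :=
    toJordanDecomposition_parts_apply_eq_zero (s := P.toSignedMeasure - N.toSignedMeasure) hS
      fun T hTS hT => by rw [Measure.toSignedMeasure_sub_apply hT, measureReal_def,
        measureReal_def, hPN T hTS hT, sub_self]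
  simp only [cvar, posRe, negRe, posIm, negIm, SignedMeasure.re_toComplexMeasure,
    SignedMeasure.im_toComplexMeasure, SignedMeasure.toJordanDecomposition_zero,
    JordanDecomposition.zero_posPart, JordanDecomposition.zero_negPart, Measure.add_apply, hpos,
    hneg, add_zero]

lemma le_tvar_toComplexMeasure_sub {P N ρ : Measure α} [IsFiniteMeasure P]
    [IsFiniteMeasure N] {S : Set α} (hS : MeasurableSet S) (hρP : ρ ≤ P) (hρS : ρ Sᶜ = 0)
    (hNS : N S = 0) : ρ ≤ tvar ((P.toSignedMeasure - N.toSignedMeasure).toComplexMeasure 0) := by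
  refine Measure.le_iff.2 fun T hT => ?_
  have hTS := hT.inter hS
  calc ρ T = ρ (T ∩ S) := (measure_inter_conull hρS).symm
    _ ≤ P (T ∩ S) := hρP _
    _ = ENNReal.ofReal (ComplexMeasure.re
          ((P.toSignedMeasure - N.toSignedMeasure).toComplexMeasure 0) (T ∩ S)) := by
        rw [SignedMeasure.re_toComplexMeasure, Measure.toSignedMeasure_sub_apply hTS,
          measureReal_def, measureReal_def, measure_mono_null Set.inter_subset_right hNS,
          ENNReal.toReal_zero, sub_zero, ENNReal.ofReal_toReal (measure_ne_top _ _)]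
    _ ≤ _ := ofReal_re_apply_le_tvar _ hTS
    _ ≤ _ := measure_mono Set.inter_subset_left

lemma cprod_toSignedMeasure {β : Type*} [MeasurableSpace β] (j : JordanDecomposition α)
    (k : JordanDecomposition β) :
    cprod (j.toSignedMeasure.toComplexMeasure 0) (k.toSignedMeasure.toComplexMeasure 0) =
      ((j.posPart.prod k.posPart + j.negPart.prod k.negPart).toSignedMeasure -
        (j.posPart.prod k.negPart + j.negPart.prod k.posPart).toSignedMeasure).toComplexMeasure
          0 := by
  rw [cprod_toComplexMeasure_zero, sprod_toSignedMeasure]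

lemma conv_toSignedMeasure (j k : JordanDecomposition ℝ) :
    conv (j.toSignedMeasure.toComplexMeasure 0) (k.toSignedMeasure.toComplexMeasure 0) =
      ((j.posPart ∗ k.posPart + j.negPart ∗ k.negPart).toSignedMeasure -
        (j.posPart ∗ k.negPart + j.negPart ∗ k.posPart).toSignedMeasure).toComplexMeasure 0 := by
  rw [conv, cprod_toSignedMeasure, map_toComplexMeasure _ _ measurable_add,
    VectorMeasure.map_zero, ← VectorMeasure.mapGm_apply, map_sub, VectorMeasure.mapGm_apply,
    VectorMeasure.mapGm_apply, ← toSignedMeasure_map _ measurable_add,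
    ← toSignedMeasure_map _ measurable_add]
  simp only [Measure.map_add _ _ measurable_add]
  rfl

section ShiftedCopy

variable {m : Measure ℝ} {S : Set ℝ}

lemma map_sub_one_apply_eq_zero (hS : MeasurableSet S) (hmS : m Sᶜ = 0)
    (hS1 : ∀ x ∈ S, x + 1 ∉ S) : m.map (· - 1) S = 0 := by
  rw [Measure.map_apply (measurable_sub_const 1) hS]
  exact measure_mono_null
    (fun y (hy : y - 1 ∈ S) (hyS : y ∈ S) => hS1 _ hy (by simpa using hyS)) hmS

lemma mutuallySingular_map_sub_one (hS : MeasurableSet S) (hmS : m Sᶜ = 0)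
    (hS1 : ∀ x ∈ S, x + 1 ∉ S) : m ⟂ₘ m.map (· - 1) :=
  ⟨Sᶜ, hS.compl, hmS, by rw [compl_compl]; exact map_sub_one_apply_eq_zero hS hmS hS1⟩

lemma dirac_add_dirac_conv (ρ : Measure ℝ) [IsFiniteMeasure ρ] :
    (Measure.dirac 0 + Measure.dirac 1) ∗ ρ = ρ + ρ.map (1 + ·) := by
  rw [Measure.add_conv, Measure.dirac_zero_conv, Measure.dirac_conv]

lemma dirac_add_dirac_conv_apply_eq [IsFiniteMeasure m] (hmS : m Sᶜ = 0)
    (hS1 : ∀ x ∈ S, x + 1 ∉ S) {T : Set ℝ} (hTS : T ⊆ S) (hT : MeasurableSet T) :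
    ((Measure.dirac 0 + Measure.dirac 1) ∗ m) T =
      ((Measure.dirac 0 + Measure.dirac 1) ∗ m.map (· - 1)) T := by
  have hplus : m ((1 + ·) ⁻¹' T) = 0 :=
    measure_mono_null (fun y (hy : 1 + y ∈ T) hyS => hS1 y hyS (add_comm y 1 ▸ hTS hy)) hmS
  have hminus : m ((· - 1) ⁻¹' T) = 0 :=
    measure_mono_null
      (fun y (hy : y - 1 ∈ T) (hyS : y ∈ S) => hS1 _ (hTS hy) (by simpa using hyS)) hmS
  rw [dirac_add_dirac_conv, dirac_add_dirac_conv, Measure.map_map (measurable_const_add 1)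
    (measurable_sub_const 1)]
  simp [Function.comp_def, Measure.map_apply (measurable_const_add 1) hT,
    Measure.map_apply (measurable_sub_const 1) hT, hplus, hminus]

theorem exists_conv_integrable_not_prod_integrable_of_shift [IsFiniteMeasure m]
    (hS : MeasurableSet S) (hmS : m Sᶜ = 0) (hS1 : ∀ x ∈ S, x + 1 ∉ S) {f : ℝ → ℂ}
    (hf0 : ∀ x ∉ S, f x = 0) (hfm : ¬ Integrable f m) :
    ∃ μ ν : ComplexMeasure ℝ, CIntegrable f (conv μ ν) ∧
      ¬ Integrable (fun p : ℝ × ℝ => f (p.1 + p.2)) (tvar (cprod μ ν)) := by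
  let j : JordanDecomposition ℝ := ⟨Measure.dirac 0 + Measure.dirac 1, 0, .zero_right⟩
  let k : JordanDecomposition ℝ := ⟨m, m.map (· - 1), mutuallySingular_map_sub_one hS hmS hS1⟩
  have hconv : cvar (conv (j.toSignedMeasure.toComplexMeasure 0)
      (k.toSignedMeasure.toComplexMeasure 0)) S = 0 := by
    rw [conv_toSignedMeasure]
    simp only [j, k, Measure.zero_conv, add_zero]
    exact cvar_toComplexMeasure_sub_apply_eq_zero hS fun T hTS hT =>
      dirac_add_dirac_conv_apply_eq hmS hS1 hTS hT
  have hle : (Measure.dirac 0).prod m ≤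
      tvar (cprod (j.toSignedMeasure.toComplexMeasure 0)
        (k.toSignedMeasure.toComplexMeasure 0)) := by
    rw [cprod_toSignedMeasure]
    simp only [j, k, Measure.zero_prod, add_zero]
    refine le_tvar_toComplexMeasure_sub ((measurableSet_singleton 0).prod hS) ?_ ?_ ?_
    · rw [Measure.add_prod]
      exact Measure.le_add_right le_rfl
    · rw [Measure.dirac_prod, Measure.map_apply measurable_prodMk_left
        ((measurableSet_singleton 0).prod hS).compl, Set.preimage_compl,
        Set.mk_preimage_prod_right (Set.mem_singleton 0), hmS]
    · rw [Measure.prod_prod, map_sub_one_apply_eq_zero hS hmS hS1, mul_zero]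
  refine ⟨_, _, (integrable_zero _ _ _).congr (measure_mono_null
    (fun x hx => by_contra fun hxS => hx (hf0 x hxS).symm) hconv), fun hint => hfm ?_⟩
  have := hint.mono_measure hle
  rw [Measure.dirac_prod] at this
  simpa [Function.comp_def] using this.comp_measurable measurable_prodMk_left

end ShiftedCopy

/-- the converse of the change-of-variables implication fails for
nonpositive measures: there are complex measures `μ, ν` and a Borel `f` integrable
w.r.t. the convolution `μ*ν`, while `(x,y) ↦ f (x+y)` is not `|μ×ν|`-integrable. -/
theorem exists_conv_integrable_not_prod_integrable :
    ∃ (μ ν : ComplexMeasure ℝ) (f : ℝ → ℂ), Measurable f ∧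
      CIntegrable f (conv μ ν) ∧
      ¬ Integrable (fun p : ℝ × ℝ => f (p.1 + p.2)) (tvar (cprod μ ν)) := by
  set f : ℝ → ℂ := (Set.Ioo 0 1).indicator fun x => (x : ℂ)⁻¹
  have hf : Measurable f :=
    (by fun_prop : Measurable fun x : ℝ => (x : ℂ)⁻¹).indicator measurableSet_Ioo
  have hfm : ¬ Integrable f (volume.restrict (Set.Ioo 0 1)) := fun h => by
    have h' := IntegrableOn.congr_fun h (fun x hx => Set.indicator_of_mem hx _) measurableSet_Ioo
    simpa using (intervalIntegral.integrableOn_Ioo_cpow_iff (s := -1) zero_lt_one).1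
      (by simpa only [Complex.cpow_neg_one] using h')
  obtain ⟨μ, ν, hfμν⟩ := exists_conv_integrable_not_prod_integrable_of_shift
    measurableSet_Ioo (by simp) (fun x hx hx1 => by linarith [hx.1, hx1.2])
    (fun x hx => Set.indicator_of_notMem hx _) hfm
  exact ⟨μ, ν, f, hf, hfμν⟩

end Paper
end
end

section
/- Let E : B(ℝ) → L(H) be a semispectral measure, μ a Borel probability measure on ℝ, and k ∈ ℕ. A vector φ ∈ H satisfies ∫ x^{2k} d(μ*E)_{φ,φ}(x) < ∞ if and only if both μ[2k] = ∫ x^{2k} dμ(x) < ∞ and ∫ x^{2k} dE_{φ,φ}(x) < ∞ (or φ = 0). Consequently, the square-integrability domain D̃(x^k, μ*E) equals D̃(x^k, E) if μ[2k] exists, and equals {0} otherwise. -/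
/-!
`(μ ∗ E)_{φ,φ}` is the convolution `μ ∗ E_{φ,φ}` of two finite measures, so the theorem is
about moments of a convolution. If both `n`-th absolute moments are finite, so is
`∬ ‖x + y‖ⁿ`, by `‖x + y‖ⁿ ≤ 2ⁿ⁻¹ (‖x‖ⁿ + ‖y‖ⁿ)`. Conversely, if `∫∫ ‖x + y‖ⁿ dν(y) dμ(x) < ∞`
then `∫ ‖x₀ + y‖ⁿ dν(y) < ∞` for some `x₀`, and the same inequality applied to
`y = (x₀ + y) + (-x₀)` bounds the moment of `ν`; by commutativity the same holds for `μ`.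
This needs both measures to be nonzero, and `E_{φ,φ}` has total mass `‖φ‖²`.
-/

open MeasureTheory
open scoped ENNReal

noncomputable section
namespace Paper

local notation "⟪" x ", " y "⟫" => @inner ℂ _ _ x y

/-- A semispectral measure (normalized positive operator measure): each measurable
set is assigned a positive bounded operator, the whole space is assigned the
identity, and the assignment is weakly countably additive. -/
structure Semispectral (Ω : Type*) [MeasurableSpace Ω] (H : Type*)
    [NormedAddCommGroup H] [InnerProductSpace ℂ H] [CompleteSpace H] where
  toFun : Set Ω → H →L[ℂ] H
  pos : ∀ X : Set Ω, MeasurableSet X → (toFun X).IsPositive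
  norm_univ : toFun Set.univ = 1
  weakly_additive : ∀ f : ℕ → Set Ω, (∀ n, MeasurableSet (f n)) →
    Pairwise (Function.onFun Disjoint f) → ∀ φ ψ : H,
      HasSum (fun n => ⟪ψ, toFun (f n) φ⟫) ⟪ψ, toFun (⋃ n, f n) φ⟫

/-- A semispectral measure is spectral (projection valued) if each operator is
idempotent. -/
def Semispectral.IsSpectral {Ω : Type*} [MeasurableSpace Ω] {H : Type*}
    [NormedAddCommGroup H] [InnerProductSpace ℂ H] [CompleteSpace H]
    (E : Semispectral Ω H) : Prop :=
  ∀ X : Set Ω, MeasurableSet X → (E.toFun X).comp (E.toFun X) = E.toFun X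

variable {H : Type*} [NormedAddCommGroup H] [InnerProductSpace ℂ H] [CompleteSpace H]

lemma lintegral_prod_fst {α β : Type*} [MeasurableSpace α] [MeasurableSpace β] {μ : Measure α}
    {ν : Measure β} [SFinite ν] {f : α → ℝ≥0∞} (hf : Measurable f) :
    ∫⁻ p, f p.1 ∂(μ.prod ν) = ν Set.univ * ∫⁻ x, f x ∂μ := by
  rw [← lintegral_map hf measurable_fst, Measure.map_fst_prod, lintegral_smul_measure,
    smul_eq_mul]

lemma lintegral_prod_snd {α β : Type*} [MeasurableSpace α] [MeasurableSpace β] {μ : Measure α}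
    {ν : Measure β} [SFinite ν] {f : β → ℝ≥0∞} (hf : Measurable f) :
    ∫⁻ p, f p.2 ∂(μ.prod ν) = μ Set.univ * ∫⁻ y, f y ∂ν := by
  rw [← lintegral_map hf measurable_snd, Measure.map_snd_prod, lintegral_smul_measure,
    smul_eq_mul]

section Moments

variable {G : Type*} [NormedAddCommGroup G]

lemma enorm_add_pow_le (x y : G) (n : ℕ) :
    ‖x + y‖ₑ ^ n ≤ 2 ^ (n - 1) * (‖x‖ₑ ^ n + ‖y‖ₑ ^ n) :=
  calc ‖x + y‖ₑ ^ n ≤ (‖x‖ₑ + ‖y‖ₑ) ^ n := pow_le_pow_left' (enorm_add_le x y) n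
    _ ≤ 2 ^ (n - 1) * (‖x‖ₑ ^ n + ‖y‖ₑ ^ n) := by
      simp only [enorm]
      exact_mod_cast add_pow_le (zero_le (a := ‖x‖₊)) (zero_le (a := ‖y‖₊)) n

lemma lintegral_enorm_add_pow_le {α : Type*} [MeasurableSpace α] (μ : Measure α)
    (f g : α → G) (n : ℕ) (hg : AEMeasurable (fun x => ‖g x‖ₑ ^ n) μ) :
    ∫⁻ x, ‖f x + g x‖ₑ ^ n ∂μ ≤
      2 ^ (n - 1) * (∫⁻ x, ‖f x‖ₑ ^ n ∂μ + ∫⁻ x, ‖g x‖ₑ ^ n ∂μ) := by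
  rw [← lintegral_add_right' _ hg, ← lintegral_const_mul' _ _ (by simp)]
  exact lintegral_mono fun x => enorm_add_pow_le (f x) (g x) n

variable [MeasurableSpace G]

lemma lintegral_enorm_pow_lt_top_of_add_left {ν : Measure G} [IsFiniteMeasure ν] (a : G)
    (n : ℕ) (h : ∫⁻ y, ‖a + y‖ₑ ^ n ∂ν < ∞) : ∫⁻ y, ‖y‖ₑ ^ n ∂ν < ∞ := by
  have key := lintegral_enorm_add_pow_le ν (a + ·) (fun _ => -a) n aemeasurable_const
  simp only [add_neg_cancel_comm, lintegral_const] at key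
  refine key.trans_lt (ENNReal.mul_lt_top (by simp) (ENNReal.add_lt_top.2 ⟨h, ?_⟩))
  exact ENNReal.mul_lt_top (by simp) (measure_lt_top _ _)

variable [OpensMeasurableSpace G] [MeasurableAdd₂ G]

lemma lintegral_enorm_pow_lt_top_of_conv {μ ν : Measure G} [SFinite μ] [NeZero μ]
    [IsFiniteMeasure ν] (n : ℕ) (h : ∫⁻ z, ‖z‖ₑ ^ n ∂(μ ∗ ν) < ∞) :
    ∫⁻ y, ‖y‖ₑ ^ n ∂ν < ∞ := by
  rw [Measure.lintegral_conv (by fun_prop)] at h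
  -- a finite iterated integral has finite fibres a.e., and `μ ≠ 0` makes "a.e." nonempty
  obtain ⟨x, hx⟩ := (ae_lt_top' (by fun_prop) h.ne).exists
  exact lintegral_enorm_pow_lt_top_of_add_left x n hx

lemma lintegral_enorm_pow_conv_lt_top_of_lt_top {μ ν : Measure G} [IsFiniteMeasure μ]
    [IsFiniteMeasure ν] (n : ℕ) (hμ : ∫⁻ x, ‖x‖ₑ ^ n ∂μ < ∞)
    (hν : ∫⁻ y, ‖y‖ₑ ^ n ∂ν < ∞) :
    ∫⁻ z, ‖z‖ₑ ^ n ∂(μ ∗ ν) < ∞ := by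
  rw [Measure.conv, lintegral_map (by fun_prop) (by fun_prop)]
  refine (lintegral_enorm_add_pow_le _ Prod.fst Prod.snd n (by fun_prop)).trans_lt ?_
  rw [lintegral_prod_fst (f := fun x => ‖x‖ₑ ^ n) (by fun_prop),
    lintegral_prod_snd (f := fun y => ‖y‖ₑ ^ n) (by fun_prop)]
  exact ENNReal.mul_lt_top (by simp) (ENNReal.add_lt_top.2
    ⟨ENNReal.mul_lt_top (measure_lt_top _ _) hμ, ENNReal.mul_lt_top (measure_lt_top _ _) hν⟩)

lemma lintegral_enorm_pow_conv_lt_top_iff (μ ν : Measure G) [IsFiniteMeasure μ]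
    [IsFiniteMeasure ν] [NeZero μ] [NeZero ν] (n : ℕ) :
    ∫⁻ z, ‖z‖ₑ ^ n ∂(μ ∗ ν) < ∞ ↔
      ∫⁻ x, ‖x‖ₑ ^ n ∂μ < ∞ ∧ ∫⁻ y, ‖y‖ₑ ^ n ∂ν < ∞ := by
  refine ⟨fun h => ⟨?_, lintegral_enorm_pow_lt_top_of_conv n h⟩,
    fun h => lintegral_enorm_pow_conv_lt_top_of_lt_top n h.1 h.2⟩
  rw [Measure.conv_comm] at h
  exact lintegral_enorm_pow_lt_top_of_conv n h

end Moments

lemma ofReal_pow_eq_enorm_pow {n : ℕ} (hn : Even n) (x : ℝ) :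
    ENNReal.ofReal (x ^ n) = ‖x‖ₑ ^ n := by
  rw [← hn.pow_abs, ENNReal.ofReal_pow (abs_nonneg x), Real.enorm_eq_ofReal_abs]

namespace Semispectral

variable {Ω : Type*} [MeasurableSpace Ω]

/-- `m φ` is the positive measure `E_{φ,φ}` for every `φ`. -/
def IsDiagMeasure (E : Semispectral Ω H) (m : H → Measure Ω) : Prop :=
  ∀ (φ : H) (X : Set Ω), MeasurableSet X → m φ X = ENNReal.ofReal (⟪φ, E.toFun X φ⟫.re)

variable {E : Semispectral Ω H} {m : H → Measure Ω}

lemma IsDiagMeasure.inner_apply_eq (hm : E.IsDiagMeasure m) (φ : H) {X : Set Ω}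
    (hX : MeasurableSet X) : ⟪φ, E.toFun X φ⟫ = ((m φ X).toReal : ℂ) := by
  rw [hm φ X hX, ENNReal.toReal_ofReal (by exact (E.pos X hX).re_inner_nonneg_right φ)]
  exact ((E.pos X hX).isSymmetric.coe_re_inner_self_apply φ).symm

lemma IsDiagMeasure.measure_univ (hm : E.IsDiagMeasure m) (φ : H) :
    m φ Set.univ = ENNReal.ofReal (‖φ‖ ^ 2) := by
  rw [hm φ _ MeasurableSet.univ, E.norm_univ]
  exact congrArg ENNReal.ofReal (inner_self_eq_norm_sq (𝕜 := ℂ) φ)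

lemma IsDiagMeasure.isFiniteMeasure (hm : E.IsDiagMeasure m) (φ : H) :
    IsFiniteMeasure (m φ) :=
  ⟨by simp [hm.measure_univ φ]⟩

lemma IsDiagMeasure.eq_zero_iff (hm : E.IsDiagMeasure m) (φ : H) : m φ = 0 ↔ φ = 0 := by
  rw [← Measure.measure_univ_eq_zero, hm.measure_univ φ]
  simp

end Semispectral

lemma Semispectral.IsDiagMeasure.eq_conv {E F : Semispectral ℝ H} {mE mF : H → Measure ℝ}
    (hmE : E.IsDiagMeasure mE) (hmF : F.IsDiagMeasure mF) (μ : Measure ℝ) [IsFiniteMeasure μ]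
    (hF : ∀ X : Set ℝ, MeasurableSet X → ∀ φ ψ : H,
      ⟪ψ, F.toFun X φ⟫ = ∫ y, ⟪ψ, E.toFun {x : ℝ | x + y ∈ X} φ⟫ ∂μ)
    (φ : H) : mF φ = μ ∗ mE φ := by
  have := hmE.isFiniteMeasure φ
  ext X hX
  have hadd : MeasurableSet ((fun p : ℝ × ℝ => p.1 + p.2) ⁻¹' X) := measurable_add hX
  have hslice (y : ℝ) :
      {x : ℝ | x + y ∈ X} = Prod.mk y ⁻¹' ((fun p : ℝ × ℝ => p.1 + p.2) ⁻¹' X) := by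
    ext x; simp [add_comm]
  have hfin : μ.prod (mE φ) ((fun p : ℝ × ℝ => p.1 + p.2) ⁻¹' X) ≠ ∞ :=
    measure_ne_top _ _
  rw [Measure.prod_apply hadd] at hfin
  rw [hmF φ X hX, hF X hX φ φ, Measure.conv, Measure.map_apply measurable_add hX,
    Measure.prod_apply hadd]
  simp_rw [hslice, hmE.inner_apply_eq φ (measurable_prodMk_left hadd)]
  rw [integral_complex_ofReal, Complex.ofReal_re, integral_toReal
      (measurable_measure_prodMk_left hadd).aemeasurable (.of_forall fun _ => measure_lt_top _ _),
    ENNReal.ofReal_toReal hfin]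

/-- square-integrability domain of the convolved semispectral measure.
`∫ x^{2k} d(μ*E)_{φ,φ} < ∞` iff both `μ[2k] < ∞` and `∫ x^{2k} dE_{φ,φ} < ∞`, or `φ = 0`.
Here `mE φ` and `mF φ` are the positive measures `E_{φ,φ}` and `(μ*E)_{φ,φ}`. -/
theorem sq_domain_conv (E F : Semispectral ℝ H) (μ : Measure ℝ) [IsProbabilityMeasure μ]
    (hF : ∀ X : Set ℝ, MeasurableSet X → ∀ φ ψ : H,
      ⟪ψ, F.toFun X φ⟫ = ∫ y, ⟪ψ, E.toFun {x : ℝ | x + y ∈ X} φ⟫ ∂μ)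
    (mE mF : H → Measure ℝ)
    (hmE : ∀ (φ : H) (X : Set ℝ), MeasurableSet X →
      mE φ X = ENNReal.ofReal (⟪φ, E.toFun X φ⟫.re))
    (hmF : ∀ (φ : H) (X : Set ℝ), MeasurableSet X →
      mF φ X = ENNReal.ofReal (⟪φ, F.toFun X φ⟫.re))
    (k : ℕ) (φ : H) :
    (∫⁻ x, ENNReal.ofReal (x ^ (2 * k)) ∂(mF φ)) < ⊤ ↔
      (((∫⁻ x, ENNReal.ofReal (x ^ (2 * k)) ∂μ) < ⊤ ∧
        (∫⁻ x, ENNReal.ofReal (x ^ (2 * k)) ∂(mE φ)) < ⊤) ∨ φ = 0) := by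
  have := Semispectral.IsDiagMeasure.isFiniteMeasure hmE φ
  simp_rw [ofReal_pow_eq_enorm_pow (even_two_mul k)]
  rcases eq_or_ne φ 0 with rfl | hφ
  · simp [(Semispectral.IsDiagMeasure.eq_zero_iff hmF 0).2 rfl]
  · have : NeZero (mE φ) := ⟨(Semispectral.IsDiagMeasure.eq_zero_iff hmE φ).not.2 hφ⟩
    rw [Semispectral.IsDiagMeasure.eq_conv hmE hmF μ hF, lintegral_enorm_pow_conv_lt_top_iff,
      or_iff_left hφ]

end Paper
end
end
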